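/- Let (A, ∘, B) be a quadratic Novikov algebra and D a derivation of (A,∘) such that B(D(a),b) = -B(a,D(b)) for all a,b ∈ A. Define ω(a,b) = B(D(a),b). Then ω is skewsymmetric and satisfies ω(a∘b, c) - ω(a⋆c, b) + ω(c∘b, a) = 0 for all a,b,c ∈ A. -/
import Mathlib


/-- If D is a derivation of a quadratic Novikov algebra which is skew-adjoint
with respect to B, then ω(a,b) := B(D(a),b) is skewsymmetric and satisfies
ω(a∘b,c) - ω(a⋆c,b) + ω(c∘b,a) = 0. -/
theorem quadratic_novikov_derivation_quasiFrobenius_form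
    {k A : Type*} [Field k] [CharZero k] [AddCommGroup A] [Module k A]
    (mul : A →ₗ[k] A →ₗ[k] A) (B : LinearMap.BilinForm k A)
    (hnov1 : ∀ a b c, mul (mul a b) c - mul a (mul b c) = mul (mul b a) c - mul b (mul a c))
    (hnov2 : ∀ a b c, mul (mul a b) c = mul (mul a c) b)
    (hsym : ∀ a b, B a b = B b a)
    (hnd : ∀ a, (∀ b, B a b = 0) → a = 0)
    (hinv : ∀ a b c, B (mul a b) c = -(B b (mul a c + mul c a)))
    (D : A →ₗ[k] A)
    (hder : ∀ a b, D (mul a b) = mul (D a) b + mul a (D b))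
    (hskew : ∀ a b, B (D a) b = -(B a (D b))) :
    (∀ a b, B (D a) b = -(B (D b) a)) ∧
    (∀ a b c, B (D (mul a b)) c - B (D (mul a c + mul c a)) b + B (D (mul c b)) a = 0) := by
  have hinv' : ∀ x y z, B (mul x y) z + B y (mul x z) + B y (mul z x) = 0 := by
    intro x y z
    have h := hinv x y z
    rw [map_add] at h
    linear_combination h
  have hskewM : ∀ x u v,
      B (D x) (mul u v) + B x (mul (D u) v) + B x (mul u (D v)) = 0 := by
    intro x u v
    have h := hskew x (mul u v)
    rw [hder, map_add] at h
    linear_combination h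
  constructor
  · intro a b
    rw [hskew, hsym]
  · intro a b c
    rw [hder a b, hder c b, map_add D (mul a c), hder a c, hder c a]
    simp only [map_add, LinearMap.add_apply]
    linear_combination hinv' a (D b) c - hinv' a (D c) b + 2 * hinv' b c (D a)
      + hinv' b (D c) a - 2 * hinv' c (D a) b - hinv' c (D b) a + hinv' (D a) b c
      - 2 * hinv' (D a) c b - hinv' (D c) a b + hsym a (mul b (D c))
      - 2 * hsym a (mul c (D b)) - hsym a (mul (D c) b) - hsym b (mul c (D a))
      - hsym b (mul (D a) c) + 2 * hsym (D a) (mul b c) + 2 * hskewM a c b
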